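/- For every integer M ≥ 8, ∑_{k=1}^{M} (1/(M+1))·(1 − k/(M+1))·cot(πk/(M+1)) < (1/π)·( log(M/2) + γ + 1/(M + 1/3) ), where γ is the Euler–Mascheroni constant. -/

import Mathlib

/-!
Since `cot x < 1 / x` on `(0, π)`, the `k`-th term is less than `(1/k - 1/(M+1)) / π`, so the sum
is less than `(H_M - M/(M+1)) / π`. The Euler–Mascheroni sequence increases to `γ`, whence
`H_M < log (M+1) + γ ≤ log M + 1/M + γ`, and the bound follows because
`1 - log 2 > 1/M + 1/(M+1)` once `M ≥ 8`.
-/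

open Real Finset

namespace Real

theorem cot_lt_inv {x : ℝ} (hx₀ : 0 < x) (hxπ : x < π) : cot x < x⁻¹ := by
  have hsin : 0 < sin x := sin_pos_of_pos_of_lt_pi hx₀ hxπ
  rcases lt_or_ge x (π / 2) with hx | hx
  · have hcos : 0 < cos x := cos_pos_of_mem_Ioo ⟨by linarith, hx⟩
    have htan : x < sin x / cos x := tan_eq_sin_div_cos x ▸ lt_tan hx₀ hx
    rw [cot_eq_cos_div_sin, ← inv_div]
    exact inv_strictAnti₀ hx₀ htan
  · calc cot x = cos x / sin x := cot_eq_cos_div_sin x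
      _ ≤ 0 :=
        div_nonpos_of_nonpos_of_nonneg (cos_nonpos_of_pi_div_two_le_of_le hx (by linarith)) hsin.le
      _ < x⁻¹ := inv_pos.2 hx₀

theorem one_sub_mul_cot_pi_mul_lt {t : ℝ} (ht₀ : 0 < t) (ht₁ : t < 1) :
    (1 - t) * cot (π * t) < (t⁻¹ - 1) / π := by
  have hcot := cot_lt_inv (by positivity) (by nlinarith [pi_pos] : π * t < π)
  calc (1 - t) * cot (π * t) < (1 - t) * (π * t)⁻¹ := mul_lt_mul_of_pos_left hcot (by linarith)
    _ = (t⁻¹ - 1) / π := by field_simp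

theorem harmonic_lt_log_add_inv_add_eulerMascheroniConstant {n : ℕ} (hn : n ≠ 0) :
    harmonic n < log n + (n : ℝ)⁻¹ + eulerMascheroniConstant := by
  have hn₀ : (0 : ℝ) < n := by positivity
  have hlog : log (n + 1) ≤ log n + (n : ℝ)⁻¹ := by
    have := log_le_sub_one_of_pos (show 0 < ((n : ℝ) + 1) / n by positivity)
    rw [log_div (by positivity) hn₀.ne'] at this
    field_simp at this ⊢
    linarith
  have := eulerMascheroniSeq_lt_eulerMascheroniConstant n
  rw [eulerMascheroniSeq] at this
  linarith

end Real

theorem sum_Icc_inv_sub_inv_succ (n : ℕ) :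
    ∑ k ∈ Icc 1 n, ((k : ℝ)⁻¹ - ((n : ℝ) + 1)⁻¹) = harmonic n - n / (n + 1) := by
  rw [sum_sub_distrib, harmonic_eq_sum_Icc, sum_const, Nat.card_Icc]
  push_cast
  simp [div_eq_mul_inv]

theorem one_div_mul_one_sub_div_mul_cot_lt {n k : ℕ} (hk : 0 < k) (hkn : k ≤ n) :
    1 / ((n : ℝ) + 1) * (1 - (k : ℝ) / (n + 1)) * cot (π * ((k : ℝ) / (n + 1))) <
      1 / π * ((k : ℝ)⁻¹ - ((n : ℝ) + 1)⁻¹) := by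
  have hk₀ : (0 : ℝ) < k := by exact_mod_cast hk
  have hkn' : (k : ℝ) < n + 1 := by exact_mod_cast Nat.lt_succ_of_le hkn
  have h := one_sub_mul_cot_pi_mul_lt (t := k / (n + 1)) (by positivity)
    ((div_lt_one (by positivity)).2 hkn')
  rw [mul_assoc]
  calc _ < 1 / ((n : ℝ) + 1) * (((k / (n + 1) : ℝ)⁻¹ - 1) / π) :=
        mul_lt_mul_of_pos_left h (by positivity)
    _ = 1 / π * ((k : ℝ)⁻¹ - ((n : ℝ) + 1)⁻¹) := by field_simp

theorem harmonic_sub_div_succ_lt {n : ℕ} (hn : 8 ≤ n) :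
    harmonic n - n / (n + 1) < log (n / 2) + eulerMascheroniConstant := by
  have hn₈ : (8 : ℝ) ≤ n := by exact_mod_cast hn
  have hH := harmonic_lt_log_add_inv_add_eulerMascheroniConstant (n := n) (by omega)
  have hinv : (n : ℝ)⁻¹ ≤ 8⁻¹ := inv_anti₀ (by norm_num) hn₈
  have hinv' : ((n : ℝ) + 1)⁻¹ ≤ 9⁻¹ := inv_anti₀ (by norm_num) (by linarith)
  have hdiv : (n : ℝ) / (n + 1) = 1 - (n + 1 : ℝ)⁻¹ := by field_simp; ring
  rw [log_div (by positivity) two_ne_zero, hdiv]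
  linarith [log_two_lt_d9]

theorem cot_sum_lt_harmonic_bound (M : ℕ) (hM : 8 ≤ M) :
    ∑ k ∈ Finset.Icc 1 M,
        (1 / ((M : ℝ) + 1)) * (1 - (k : ℝ) / (M + 1)) *
          Real.cot (Real.pi * ((k : ℝ) / (M + 1))) <
      1 / Real.pi * (Real.log ((M : ℝ) / 2) + Real.eulerMascheroniConstant
        + 1 / ((M : ℝ) + 1 / 3)) := by
  calc _ < ∑ k ∈ Icc 1 M, 1 / π * ((k : ℝ)⁻¹ - ((M : ℝ) + 1)⁻¹) :=
        sum_lt_sum_of_nonempty ⟨1, mem_Icc.2 ⟨le_rfl, by omega⟩⟩ fun k hk ↦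
          one_div_mul_one_sub_div_mul_cot_lt (mem_Icc.1 hk).1 (mem_Icc.1 hk).2
    _ = 1 / π * (harmonic M - M / (M + 1)) := by rw [← mul_sum, sum_Icc_inv_sub_inv_succ]
    _ ≤ _ := by
      gcongr
      linarith [harmonic_sub_div_succ_lt hM, one_div_pos.2 (by positivity : (0 : ℝ) < M + 1 / 3)]
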